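/- arXiv:2012.15566 — 5 statements merged into one kernel-verified Lean document; each statement's English description precedes it below -/
import Mathlib

section
/- AIL objective decomposition (core identity in the proof of Theorem 1): For every belief-conditional policy π : B → pmf(A), the equality ∑_{(s,b)∈S×B} d(s,b)·KL(π_θ(·|s) ‖ π(·|b)) = ∑_{b∈B} d(b)·KL(π̂(·|b) ‖ π(·|b)) + C holds in [0,+∞], where the finite constant C = ∑_{(s,b)∈S×B} d(s,b)·∑_{a∈A} π_θ(a|s)·log π_θ(a|s) − ∑_{b∈B} d(b)·∑_{a∈A} π̂(a|b)·log π̂(a|b) (with the convention 0·log 0 = 0) does not depend on π. -/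
open scoped BigOperators ENNReal Classical

noncomputable section

/-- A probability mass function on a finite type. -/
def IsPmf {X : Type*} [Fintype X] (p : X → ℝ) : Prop :=
  (∀ x, 0 ≤ p x) ∧ ∑ x, p x = 1

/-- Kullback–Leibler divergence between two pmfs on a finite type, valued in `[0, ∞]`,
with the conventions `0 * log (0 / q a) = 0` and `KL(p‖q) = ∞` whenever
`p a > 0 = q a` for some `a`. -/
def klDiv {A : Type*} [Fintype A] (p q : A → ℝ) : ℝ≥0∞ :=
  if ∀ a, q a = 0 → p a = 0 then ENNReal.ofReal (∑ a, p a * Real.log (p a / q a)) else ⊤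

open Finset

/-! If `π(·|b)` dominates `πθ(·|s)` whenever `d(s,b) > 0`, both sides are finite and each
`KL(p‖q)` splits as `∑ p log p - ∑ p log q`; the cross-entropy terms agree because
`d(b)·π̂(a|b) = ∑_s d(s,b)·πθ(a|s)`, and the entropy terms make up `C`. Otherwise some `d(s,b) > 0`
has `πθ(a|s) > 0 = π(a|b)`, which by the same identity gives `d(b) > 0` and `π̂(a|b) > 0`, so both
sides are `⊤`. -/

section Gibbs

variable {A : Type*} [Fintype A]

lemma sub_le_mul_log_div {p q : ℝ} (hp : 0 ≤ p) (hq : 0 ≤ q) (hpq : q = 0 → p = 0) :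
    p - q ≤ p * Real.log (p / q) := by
  rcases hp.eq_or_lt with rfl | hp
  · simpa using hq
  have hq : 0 < q := hq.lt_of_ne fun h => hp.ne' (hpq h.symm)
  have h := Real.one_sub_inv_le_log_of_pos (div_pos hp hq)
  rw [inv_div] at h
  calc p - q = p * (1 - q / p) := by field_simp
    _ ≤ p * Real.log (p / q) := mul_le_mul_of_nonneg_left h hp.le

theorem IsPmf.sum_mul_log_div_nonneg {p q : A → ℝ} (hp : IsPmf p) (hq : IsPmf q)
    (hpq : ∀ a, q a = 0 → p a = 0) : 0 ≤ ∑ a, p a * Real.log (p a / q a) :=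
  calc (0 : ℝ) = ∑ a, (p a - q a) := by rw [sum_sub_distrib, hp.2, hq.2, sub_self]
    _ ≤ ∑ a, p a * Real.log (p a / q a) :=
      sum_le_sum fun a _ => sub_le_mul_log_div (hp.1 a) (hq.1 a) (hpq a)

lemma sum_mul_log_div_eq_sub {p q : A → ℝ} (hpq : ∀ a, q a = 0 → p a = 0) :
    ∑ a, p a * Real.log (p a / q a) = ∑ a, p a * Real.log (p a) - ∑ a, p a * Real.log (q a) := by
  rw [← sum_sub_distrib]
  refine sum_congr rfl fun a _ => ?_
  by_cases hp : p a = 0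
  · simp [hp]
  · rw [Real.log_div hp fun hq => hp (hpq a hq), mul_sub]

end Gibbs

section WeightedKL

variable {ι A : Type*} [Fintype ι] [Fintype A] {w : ι → ℝ} {p q : ι → A → ℝ}

theorem coe_sum_ofReal_mul_klDiv (hw : ∀ i, 0 ≤ w i) (hq : ∀ i, IsPmf (q i))
    (hp : ∀ i, 0 < w i → IsPmf (p i) ∧ ∀ a, q i a = 0 → p i a = 0) :
    ((∑ i, ENNReal.ofReal (w i) * klDiv (p i) (q i) : ℝ≥0∞) : EReal) =
      ((∑ i, w i * (∑ a, p i a * Real.log (p i a) - ∑ a, p i a * Real.log (q i a)) : ℝ) : EReal) := by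
  have hterm : ∀ i, ENNReal.ofReal (w i) * klDiv (p i) (q i)
      = ENNReal.ofReal (w i * ∑ a, p i a * Real.log (p i a / q i a))
      ∧ 0 ≤ w i * ∑ a, p i a * Real.log (p i a / q i a) := by
    intro i
    rcases (hw i).eq_or_lt with hw0 | hwpos
    · simp [← hw0]
    obtain ⟨hpi, hpq⟩ := hp i hwpos
    rw [klDiv, if_pos hpq, ← ENNReal.ofReal_mul hwpos.le]
    exact ⟨rfl, mul_nonneg hwpos.le (hpi.sum_mul_log_div_nonneg (hq i) hpq)⟩
  rw [sum_congr rfl fun i _ => (hterm i).1, ← ENNReal.ofReal_sum_of_nonneg fun i _ => (hterm i).2,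
    EReal.coe_ennreal_ofReal, max_eq_left (sum_nonneg fun i _ => (hterm i).2)]
  refine congrArg _ (sum_congr rfl fun i _ => ?_)
  rcases (hw i).eq_or_lt with hw0 | hwpos
  · simp [← hw0]
  · rw [sum_mul_log_div_eq_sub (hp i hwpos).2]

theorem sum_ofReal_mul_klDiv_eq_top (h : ∃ i, 0 < w i ∧ ∃ a, q i a = 0 ∧ p i a ≠ 0) :
    ∑ i, ENNReal.ofReal (w i) * klDiv (p i) (q i) = ⊤ := by
  obtain ⟨i, hwi, a, hqa, hpa⟩ := h
  rw [ENNReal.sum_eq_top]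
  refine ⟨i, mem_univ i, ?_⟩
  rw [klDiv, if_neg fun hpq => hpa (hpq a hqa), ENNReal.mul_top (ENNReal.ofReal_pos.mpr hwi).ne']

end WeightedKL

section ImplicitPolicy

variable {S B A : Type*} [Fintype S] {d : S × B → ℝ} {πθ : S → A → ℝ} {dB : B → ℝ}
  {πhat : B → A → ℝ}

lemma marginal_nonneg (hd : ∀ x, 0 ≤ d x) (hdB : ∀ b, dB b = ∑ s, d (s, b)) (b : B) :
    0 ≤ dB b :=
  hdB b ▸ sum_nonneg fun s _ => hd (s, b)

lemma marginal_mul_implicitPolicy (hd : ∀ x, 0 ≤ d x) (hdB : ∀ b, dB b = ∑ s, d (s, b))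
    (hπhat : ∀ b, 0 < dB b → ∀ a, πhat b a = ∑ s, d (s, b) / dB b * πθ s a) (b : B) (a : A) :
    dB b * πhat b a = ∑ s, d (s, b) * πθ s a := by
  rcases (marginal_nonneg hd hdB b).eq_or_lt with hb | hb
  · have hzero := (sum_eq_zero_iff_of_nonneg fun s _ => hd (s, b)).mp (hb.trans (hdB b)).symm
    simp [← hb, fun s => hzero s (mem_univ s)]
  · rw [hπhat b hb a, mul_sum]
    exact sum_congr rfl fun s _ => by field_simp

lemma isPmf_implicitPolicy [Fintype A] (hd : ∀ x, 0 ≤ d x) (hdB : ∀ b, dB b = ∑ s, d (s, b))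
    (hmix : ∀ b a, dB b * πhat b a = ∑ s, d (s, b) * πθ s a) (hπθ : ∀ s, IsPmf (πθ s))
    {b : B} (hb : 0 < dB b) : IsPmf (πhat b) := by
  refine ⟨fun a => nonneg_of_mul_nonneg_right ?_ hb, mul_left_cancel₀ hb.ne' ?_⟩
  · exact hmix b a ▸ sum_nonneg fun s _ => mul_nonneg (hd (s, b)) ((hπθ s).1 a)
  · rw [mul_sum, sum_congr rfl fun a _ => hmix b a, sum_comm, mul_one, hdB b]
    exact sum_congr rfl fun s _ => by rw [← mul_sum, (hπθ s).2, mul_one]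

lemma implicitPolicy_eq_zero (hd : ∀ x, 0 ≤ d x)
    (hmix : ∀ b a, dB b * πhat b a = ∑ s, d (s, b) * πθ s a)
    {b : B} {a : A} (hb : 0 < dB b) (h : ∀ s, 0 < d (s, b) → πθ s a = 0) : πhat b a = 0 := by
  refine (mul_eq_zero.mp ((hmix b a).trans (sum_eq_zero fun s _ => ?_))).resolve_left hb.ne'
  rcases (hd (s, b)).eq_or_lt with hs | hs
  · rw [← hs, zero_mul]
  · rw [h s hs, mul_zero]

lemma marginal_pos_and_implicitPolicy_pos [Fintype A] (hd : ∀ x, 0 ≤ d x)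
    (hdB : ∀ b, dB b = ∑ s, d (s, b)) (hmix : ∀ b a, dB b * πhat b a = ∑ s, d (s, b) * πθ s a)
    (hπθ : ∀ s, IsPmf (πθ s)) {s : S} {b : B} {a : A} (hs : 0 < d (s, b)) (ha : 0 < πθ s a) :
    0 < dB b ∧ 0 < πhat b a := by
  have h : 0 < dB b * πhat b a := hmix b a ▸ (mul_pos hs ha).trans_le
    (single_le_sum (fun s' _ => mul_nonneg (hd (s', b)) ((hπθ s').1 a)) (mem_univ s))
  have hb : 0 < dB b := (marginal_nonneg hd hdB b).lt_of_ne fun hb => by simp [← hb] at h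
  exact ⟨hb, pos_of_mul_pos_right h hb.le⟩

lemma sum_mul_sum_mul_eq_implicitPolicy [Fintype B] [Fintype A]
    (hmix : ∀ b a, dB b * πhat b a = ∑ s, d (s, b) * πθ s a) (f : B → A → ℝ) :
    ∑ x : S × B, d x * ∑ a, πθ x.1 a * f x.2 a = ∑ b, dB b * ∑ a, πhat b a * f b a := by
  rw [Fintype.sum_prod_type_right]
  refine sum_congr rfl fun b _ => ?_
  calc ∑ s, d (s, b) * ∑ a, πθ s a * f b a = ∑ a, ∑ s, d (s, b) * πθ s a * f b a := by
        rw [sum_comm]; simp only [mul_sum, mul_assoc]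
    _ = ∑ a, dB b * πhat b a * f b a := by simp only [hmix, sum_mul]
    _ = dB b * ∑ a, πhat b a * f b a := by simp only [mul_sum, mul_assoc]

end ImplicitPolicy

theorem ail_objective_decomposition_general
    {S B A : Type*} [Fintype S] [Fintype B] [Fintype A]
    (d : S × B → ℝ) (hd : IsPmf d)
    (πθ : S → A → ℝ) (hπθ : ∀ s, IsPmf (πθ s))
    (dB : B → ℝ) (hdB : ∀ b, dB b = ∑ s, d (s, b))
    (πhat : B → A → ℝ)
    (hπhat_pos : ∀ b, 0 < dB b → ∀ a, πhat b a = ∑ s, d (s, b) / dB b * πθ s a)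
    (C : ℝ)
    (hC : C = (∑ x : S × B, d x * ∑ a, πθ x.1 a * Real.log (πθ x.1 a))
        - ∑ b, dB b * ∑ a, πhat b a * Real.log (πhat b a)) :
    ∀ π : B → A → ℝ, (∀ b, IsPmf (π b)) →
      ((∑ x : S × B, ENNReal.ofReal (d x) * klDiv (πθ x.1) (π x.2) : ℝ≥0∞) : EReal)
        = ((∑ b, ENNReal.ofReal (dB b) * klDiv (πhat b) (π b) : ℝ≥0∞) : EReal)
          + (C : EReal) := by
  intro π hπ
  have hd0 : ∀ x, 0 ≤ d x := hd.1
  have hmix := marginal_mul_implicitPolicy hd0 hdB hπhat_pos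
  by_cases habs : ∀ x : S × B, 0 < d x → ∀ a, π x.2 a = 0 → πθ x.1 a = 0
  · have hhat : ∀ b, 0 < dB b → IsPmf (πhat b) ∧ ∀ a, π b a = 0 → πhat b a = 0 := fun b hb =>
      ⟨isPmf_implicitPolicy hd0 hdB hmix hπθ hb,
        fun a ha => implicitPolicy_eq_zero hd0 hmix hb fun s hs => habs (s, b) hs a ha⟩
    rw [coe_sum_ofReal_mul_klDiv hd0 (fun x => hπ x.2) fun x hx => ⟨hπθ x.1, habs x hx⟩,
      coe_sum_ofReal_mul_klDiv (marginal_nonneg hd0 hdB) hπ hhat, ← EReal.coe_add,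
      EReal.coe_eq_coe_iff]
    simp only [mul_sub, sum_sub_distrib]
    rw [sum_mul_sum_mul_eq_implicitPolicy hmix fun b a => Real.log (π b a), hC]
    ring
  · push Not at habs
    obtain ⟨x, hx, a, hπa, hθa⟩ := habs
    obtain ⟨hb, hhat⟩ := marginal_pos_and_implicitPolicy_pos hd0 hdB hmix hπθ hx
      (((hπθ x.1).1 a).lt_of_ne' hθa)
    rw [sum_ofReal_mul_klDiv_eq_top ⟨x, hx, a, hπa, hθa⟩,
      sum_ofReal_mul_klDiv_eq_top ⟨x.2, hb, a, hπa, hhat.ne'⟩]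
    simp

/-- AIL objective decomposition: for every belief-conditional policy `π`,
`∑_{(s,b)} d(s,b)·KL(πθ(·|s) ‖ π(·|b)) = ∑_b d(b)·KL(π̂(·|b) ‖ π(·|b)) + C` in `[0,∞]`,
where the finite constant `C` does not depend on `π`. -/
theorem ail_objective_decomposition
    {S B A : Type*} [Fintype S] [Fintype B] [Fintype A]
    [Nonempty S] [Nonempty B] [Nonempty A]
    (d : S × B → ℝ) (hd : IsPmf d)
    (πθ : S → A → ℝ) (hπθ : ∀ s, IsPmf (πθ s))
    (dB : B → ℝ) (hdB : ∀ b, dB b = ∑ s, d (s, b))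
    (πhat : B → A → ℝ)
    (hπhat_pos : ∀ b, 0 < dB b → ∀ a, πhat b a = ∑ s, d (s, b) / dB b * πθ s a)
    (hπhat_zero : ∀ b, dB b = 0 → ∀ a, πhat b a = 1 / (Fintype.card A : ℝ))
    (C : ℝ)
    (hC : C = (∑ x : S × B, d x * ∑ a, πθ x.1 a * Real.log (πθ x.1 a))
        - ∑ b, dB b * ∑ a, πhat b a * Real.log (πhat b a)) :
    ∀ π : B → A → ℝ, (∀ b, IsPmf (π b)) →
      ((∑ x : S × B, ENNReal.ofReal (d x) * klDiv (πθ x.1) (π x.2) : ℝ≥0∞) : EReal)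
        = ((∑ b, ENNReal.ofReal (dB b) * klDiv (πhat b) (π b) : ℝ≥0∞) : EReal)
          + (C : EReal) :=
  ail_objective_decomposition_general d hd πθ hπθ dB hdB πhat hπhat_pos C hC
end
end

section
/- Theorem 1 (Asymmetric IL target): The implicit policy minimizes the asymmetric imitation learning objective: for every belief-conditional policy π : B → pmf(A), ∑_{(s,b)∈S×B} d(s,b)·KL(π_θ(·|s) ‖ π̂(·|b)) ≤ ∑_{(s,b)∈S×B} d(s,b)·KL(π_θ(·|s) ‖ π(·|b)), the inequality holding in [0,+∞]; moreover the left-hand side is finite. -/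
open scoped BigOperators ENNReal Classical

noncomputable section

/-! The objective splits over beliefs. For a fixed belief `b` with `d(b) > 0`, the implicit policy
`π̂(·|b)` is the `d(·|b)`-mixture `m` of the state policies, and for every competitor `q`
the compensation identity
`∑ₛ d(s,b) KL(π_θ(·|s) ‖ q) = ∑ₛ d(s,b) KL(π_θ(·|s) ‖ m) + d(b) KL(m ‖ q)`
holds, so Gibbs' inequality `KL(m ‖ q) ≥ 0` gives the claim. Finiteness at `m` holds because
every state policy with positive weight is absolutely continuous with respect to the mixture. -/

open Finset

/-- `p ≪ q`. -/
def AbsCont {A : Type*} (p q : A → ℝ) : Prop :=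
  ∀ a, q a = 0 → p a = 0

section KL

variable {A : Type*} [Fintype A]

/-- The Kullback–Leibler sum as a real number, meaningful when `AbsCont p q`. -/
def klReal (p q : A → ℝ) : ℝ :=
  ∑ a, p a * Real.log (p a / q a)

lemma klDiv_of_absCont {p q : A → ℝ} (h : AbsCont p q) :
    klDiv p q = ENNReal.ofReal (klReal p q) :=
  if_pos h

lemma klDiv_of_not_absCont {p q : A → ℝ} (h : ¬AbsCont p q) : klDiv p q = ⊤ :=
  if_neg h

lemma sub_le_mul_log_div_s1 {x y : ℝ} (hx : 0 ≤ x) (hy : 0 ≤ y) (hxy : y = 0 → x = 0) :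
    x - y ≤ x * Real.log (x / y) := by
  rcases hx.eq_or_lt with rfl | hx
  · simpa using hy
  have hy : 0 < y := hy.lt_of_ne fun h => hx.ne' (hxy h.symm)
  have hlog := Real.one_sub_inv_le_log_of_pos (div_pos hx hy)
  rw [inv_div] at hlog
  calc x - y = x * (1 - y / x) := by field_simp
    _ ≤ x * Real.log (x / y) := mul_le_mul_of_nonneg_left hlog hx.le

/-- Gibbs' inequality. -/
lemma klReal_nonneg {p q : A → ℝ} (hp : IsPmf p) (hq : IsPmf q) (h : AbsCont p q) :
    0 ≤ klReal p q := by
  have hterm : ∀ a, p a - q a ≤ p a * Real.log (p a / q a) := fun a =>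
    sub_le_mul_log_div_s1 (hp.1 a) (hq.1 a) (h a)
  have := sum_le_sum fun a (_ : a ∈ univ) => hterm a
  rwa [sum_sub_distrib, hp.2, hq.2, sub_self] at this

lemma klReal_eq_klReal_add {p q m : A → ℝ} (hpm : AbsCont p m) (hpq : AbsCont p q) :
    klReal p q = klReal p m + ∑ a, p a * Real.log (m a / q a) := by
  rw [klReal, klReal, ← sum_add_distrib]
  refine sum_congr rfl fun a _ => ?_
  by_cases hpa : p a = 0
  · simp [hpa]
  have hma : m a ≠ 0 := fun h => hpa (hpm a h)
  have hqa : q a ≠ 0 := fun h => hpa (hpq a h)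
  rw [Real.log_div hpa hqa, Real.log_div hpa hma, Real.log_div hma hqa]
  ring

lemma ofReal_mul_klDiv {w : ℝ} {p q : A → ℝ} (hw : 0 ≤ w) (h : 0 < w → AbsCont p q) :
    ENNReal.ofReal w * klDiv p q = ENNReal.ofReal (w * klReal p q) := by
  rcases hw.eq_or_lt with rfl | hw
  · simp
  rw [klDiv_of_absCont (h hw), ENNReal.ofReal_mul hw.le]

lemma absCont_of_ofReal_mul_klDiv_ne_top {w : ℝ} {p q : A → ℝ} (hw : 0 < w)
    (h : ENNReal.ofReal w * klDiv p q ≠ ⊤) : AbsCont p q := by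
  by_contra hpq
  rw [klDiv_of_not_absCont hpq] at h
  exact h (ENNReal.mul_top (ENNReal.ofReal_pos.2 hw).ne')

end KL

section Mixture

variable {S A : Type*} [Fintype S]

def mixture (w : S → ℝ) (p : S → A → ℝ) (a : A) : ℝ :=
  ∑ s, w s / (∑ s', w s') * p s a

variable {w : S → ℝ} {p : S → A → ℝ}

lemma sum_mul_eq_mul_mixture (hW : ∑ s, w s ≠ 0) (a : A) :
    ∑ s, w s * p s a = (∑ s, w s) * mixture w p a := by
  rw [mixture, mul_sum]
  refine sum_congr rfl fun s _ => ?_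
  field_simp

lemma absCont_mixture (hw : ∀ s, 0 ≤ w s) (hp : ∀ s a, 0 ≤ p s a) {s : S} (hs : 0 < w s) :
    AbsCont (p s) (mixture w p) := by
  intro a ha
  have hW : 0 < ∑ s', w s' :=
    hs.trans_le (single_le_sum (fun s' _ => hw s') (mem_univ s))
  have hterms := (sum_eq_zero_iff_of_nonneg fun s' _ =>
    mul_nonneg (div_nonneg (hw s') hW.le) (hp s' a)).1 ha s (mem_univ s)
  exact (mul_eq_zero.1 hterms).resolve_left (div_pos hs hW).ne'

lemma mixture_absCont (hw : ∀ s, 0 ≤ w s) {q : A → ℝ}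
    (hq : ∀ s, 0 < w s → AbsCont (p s) q) :
    AbsCont (mixture w p) q := by
  intro a ha
  refine sum_eq_zero fun s _ => ?_
  rcases (hw s).eq_or_lt with hs | hs
  · rw [← hs, zero_div, zero_mul]
  · rw [hq s hs a ha, mul_zero]

variable [Fintype A]

lemma isPmf_mixture (hw : ∀ s, 0 ≤ w s) (hW : 0 < ∑ s, w s) (hp : ∀ s, IsPmf (p s)) :
    IsPmf (mixture w p) := by
  refine ⟨fun a => sum_nonneg fun s _ => mul_nonneg (div_nonneg (hw s) hW.le) ((hp s).1 a), ?_⟩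
  simp only [mixture]
  rw [sum_comm]
  simp_rw [← mul_sum, (hp _).2, mul_one, ← sum_div]
  exact div_self hW.ne'

/-- The compensation identity for the Kullback–Leibler divergence. -/
lemma sum_mul_klReal_eq_add (hw : ∀ s, 0 ≤ w s) (hW : 0 < ∑ s, w s) (hp : ∀ s a, 0 ≤ p s a)
    {q : A → ℝ} (hq : ∀ s, 0 < w s → AbsCont (p s) q) :
    ∑ s, w s * klReal (p s) q =
      ∑ s, w s * klReal (p s) (mixture w p) + (∑ s, w s) * klReal (mixture w p) q := by
  have hsplit : ∀ s, w s * klReal (p s) q =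
      w s * klReal (p s) (mixture w p) + w s * ∑ a, p s a * Real.log (mixture w p a / q a) := by
    intro s
    rcases (hw s).eq_or_lt with hs | hs
    · simp [← hs]
    · rw [klReal_eq_klReal_add (absCont_mixture hw hp hs) (hq s hs), mul_add]
  have hcross : ∑ s, w s * ∑ a, p s a * Real.log (mixture w p a / q a) =
      (∑ s, w s) * klReal (mixture w p) q := by
    simp_rw [mul_sum, ← mul_assoc]
    rw [sum_comm]
    simp_rw [← sum_mul, sum_mul_eq_mul_mixture hW.ne', klReal, mul_sum, mul_assoc]
  rw [sum_congr rfl fun s _ => hsplit s, sum_add_distrib, hcross]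

lemma sum_mul_klReal_mixture_le (hw : ∀ s, 0 ≤ w s) (hW : 0 < ∑ s, w s)
    (hp : ∀ s, IsPmf (p s)) {q : A → ℝ} (hq : IsPmf q) (habs : ∀ s, 0 < w s → AbsCont (p s) q) :
    ∑ s, w s * klReal (p s) (mixture w p) ≤ ∑ s, w s * klReal (p s) q := by
  have hp' : ∀ s a, 0 ≤ p s a := fun s => (hp s).1
  rw [sum_mul_klReal_eq_add hw hW hp' habs, le_add_iff_nonneg_right]
  exact mul_nonneg hW.le
    (klReal_nonneg (isPmf_mixture hw hW hp) hq (mixture_absCont hw habs))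

lemma sum_ofReal_mul_klDiv_eq (hw : ∀ s, 0 ≤ w s) (hp : ∀ s, IsPmf (p s)) {q : A → ℝ}
    (hq : IsPmf q) (habs : ∀ s, 0 < w s → AbsCont (p s) q) :
    ∑ s, ENNReal.ofReal (w s) * klDiv (p s) q =
      ENNReal.ofReal (∑ s, w s * klReal (p s) q) := by
  have hnonneg : ∀ s, 0 ≤ w s * klReal (p s) q := by
    intro s
    rcases (hw s).eq_or_lt with hs | hs
    · simp [← hs]
    · exact mul_nonneg hs.le (klReal_nonneg (hp s) hq (habs s hs))
  rw [ENNReal.ofReal_sum_of_nonneg fun s _ => hnonneg s]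
  exact sum_congr rfl fun s _ => ofReal_mul_klDiv (hw s) (habs s)

lemma sum_ofReal_mul_klDiv_mixture_ne_top (hw : ∀ s, 0 ≤ w s) (hW : 0 < ∑ s, w s)
    (hp : ∀ s, IsPmf (p s)) :
    ∑ s, ENNReal.ofReal (w s) * klDiv (p s) (mixture w p) ≠ ⊤ := by
  rw [sum_ofReal_mul_klDiv_eq hw hp (isPmf_mixture hw hW hp)
    fun s hs => absCont_mixture hw (fun s => (hp s).1) hs]
  exact ENNReal.ofReal_ne_top

lemma sum_ofReal_mul_klDiv_mixture_le (hw : ∀ s, 0 ≤ w s) (hW : 0 < ∑ s, w s)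
    (hp : ∀ s, IsPmf (p s)) {q : A → ℝ} (hq : IsPmf q) :
    ∑ s, ENNReal.ofReal (w s) * klDiv (p s) (mixture w p) ≤
      ∑ s, ENNReal.ofReal (w s) * klDiv (p s) q := by
  by_cases htop : ∑ s, ENNReal.ofReal (w s) * klDiv (p s) q = ⊤
  · exact htop ▸ le_top
  have habs : ∀ s, 0 < w s → AbsCont (p s) q := fun s hs =>
    absCont_of_ofReal_mul_klDiv_ne_top hs (ENNReal.sum_ne_top.1 htop s (mem_univ s))
  rw [sum_ofReal_mul_klDiv_eq hw hp (isPmf_mixture hw hW hp)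
      fun s hs => absCont_mixture hw (fun s => (hp s).1) hs,
    sum_ofReal_mul_klDiv_eq hw hp hq habs]
  exact ENNReal.ofReal_le_ofReal (sum_mul_klReal_mixture_le hw hW hp hq habs)

end Mixture

theorem asymmetric_il_target_general
    {S B A : Type*} [Fintype S] [Fintype B] [Fintype A]
    (d : S × B → ℝ) (hd : IsPmf d)
    (πθ : S → A → ℝ) (hπθ : ∀ s, IsPmf (πθ s))
    (dB : B → ℝ) (hdB : ∀ b, dB b = ∑ s, d (s, b))
    (πhat : B → A → ℝ)
    (hπhat_pos : ∀ b, 0 < dB b → ∀ a, πhat b a = ∑ s, d (s, b) / dB b * πθ s a) :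
    (∑ x : S × B, ENNReal.ofReal (d x) * klDiv (πθ x.1) (πhat x.2)) ≠ ⊤ ∧
    ∀ π : B → A → ℝ, (∀ b, IsPmf (π b)) →
      (∑ x : S × B, ENNReal.ofReal (d x) * klDiv (πθ x.1) (πhat x.2))
        ≤ ∑ x : S × B, ENNReal.ofReal (d x) * klDiv (πθ x.1) (π x.2) := by
  have hd0 : ∀ b s, 0 ≤ d (s, b) := fun b s => hd.1 (s, b)
  have hbelief : ∀ b, (∑ s, ENNReal.ofReal (d (s, b)) * klDiv (πθ s) (πhat b)) ≠ ⊤ ∧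
      ∀ q, IsPmf q → ∑ s, ENNReal.ofReal (d (s, b)) * klDiv (πθ s) (πhat b) ≤
        ∑ s, ENNReal.ofReal (d (s, b)) * klDiv (πθ s) q := by
    intro b
    rcases (sum_nonneg fun s _ => hd0 b s).eq_or_lt with hb | hb
    · have hzero : ∀ s, d (s, b) = 0 :=
        fun s => (sum_eq_zero_iff_of_nonneg fun s _ => hd0 b s).1 hb.symm s (mem_univ s)
      simp [hzero]
    · have hmix : πhat b = mixture (fun s => d (s, b)) πθ := by
        funext a
        rw [hπhat_pos b (hdB b ▸ hb) a, hdB b, mixture]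
      rw [hmix]
      exact ⟨sum_ofReal_mul_klDiv_mixture_ne_top (hd0 b) hb hπθ,
        fun q hq => sum_ofReal_mul_klDiv_mixture_le (hd0 b) hb hπθ hq⟩
  simp only [Fintype.sum_prod_type_right]
  exact ⟨ENNReal.sum_ne_top.2 fun b _ => (hbelief b).1,
    fun π hπ => sum_le_sum fun b _ => (hbelief b).2 (π b) (hπ b)⟩

/-- Theorem 1 (Asymmetric IL target): the implicit policy minimizes the asymmetric
imitation learning objective, and at the implicit policy the objective is finite. -/
theorem asymmetric_il_target
    {S B A : Type*} [Fintype S] [Fintype B] [Fintype A]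
    [Nonempty S] [Nonempty B] [Nonempty A]
    (d : S × B → ℝ) (hd : IsPmf d)
    (πθ : S → A → ℝ) (hπθ : ∀ s, IsPmf (πθ s))
    (dB : B → ℝ) (hdB : ∀ b, dB b = ∑ s, d (s, b))
    (πhat : B → A → ℝ)
    (hπhat_pos : ∀ b, 0 < dB b → ∀ a, πhat b a = ∑ s, d (s, b) / dB b * πθ s a)
    (hπhat_zero : ∀ b, dB b = 0 → ∀ a, πhat b a = 1 / (Fintype.card A : ℝ)) :
    (∑ x : S × B, ENNReal.ofReal (d x) * klDiv (πθ x.1) (πhat x.2)) ≠ ⊤ ∧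
    ∀ π : B → A → ℝ, (∀ b, IsPmf (π b)) →
      (∑ x : S × B, ENNReal.ofReal (d x) * klDiv (πθ x.1) (πhat x.2))
        ≤ ∑ x : S × B, ENNReal.ofReal (d x) * klDiv (πθ x.1) (π x.2) :=
  asymmetric_il_target_general d hd πθ hπθ dB hdB πhat hπhat_pos
end
end

section
/- Identifiable policy pairs induce equal trajectory distributions and equal returns: let π_θ be a state-conditional policy and π_φ a belief-conditional policy such that ∑_{(s,b)∈S×B} d^{π_φ}(s,b)·KL(π_θ(·|s) ‖ π_φ(·|b)) = 0 (the pair {π_θ, π_φ} is identifiable). Then q_{π_θ}(t) = q_{π_φ}(t) for every t ≥ 0, and for every reward function r : (S×B) × A × (S×B) → ℝ the expected discounted returns coincide: J(π_θ) = J(π_φ). -/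
open scoped BigOperators ENNReal Classical

noncomputable section

/-- Time-`t` marginal pmf of the Markov chain `(s_t, b_t)` induced by initial
distribution `μ₀`, transition kernel `T`, and a policy `pol` on state–belief pairs. -/
def traj {S B A : Type*} [Fintype S] [Fintype B] [Fintype A]
    (μ₀ : S × B → ℝ) (T : S × B → A → S × B → ℝ)
    (pol : S × B → A → ℝ) : ℕ → S × B → ℝ
  | 0 => μ₀
  | t + 1 => fun x' => ∑ x : S × B, ∑ a : A, traj μ₀ T pol t x * pol x a * T x a x'

/-- The pair policy induced by a belief-conditional policy. -/
def beliefPol {S B A : Type*} (κ : B → A → ℝ) : S × B → A → ℝ := fun x a => κ x.2 a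

/-- The pair policy induced by a state-conditional policy. -/
def statePol {S B A : Type*} (π : S → A → ℝ) : S × B → A → ℝ := fun x a => π x.1 a

/-- Discounted occupancy `d^pol(s,b) = (1-γ)·∑_t γ^t·q_pol(t)(s,b)`. -/
def occ {S B A : Type*} [Fintype S] [Fintype B] [Fintype A]
    (γ : ℝ) (μ₀ : S × B → ℝ) (T : S × B → A → S × B → ℝ)
    (pol : S × B → A → ℝ) (x : S × B) : ℝ :=
  (1 - γ) * ∑' t : ℕ, γ ^ t * traj μ₀ T pol t x

/-- Expected discounted return `J(pol) = ∑_t γ^t·E[r((s_t,b_t),a_t,(s_{t+1},b_{t+1}))]`. -/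
def ret {S B A : Type*} [Fintype S] [Fintype B] [Fintype A]
    (γ : ℝ) (μ₀ : S × B → ℝ) (T : S × B → A → S × B → ℝ)
    (pol : S × B → A → ℝ) (r : S × B → A → S × B → ℝ) : ℝ :=
  ∑' t : ℕ, γ ^ t * ∑ x : S × B, ∑ a : A, ∑ x' : S × B,
    traj μ₀ T pol t x * pol x a * T x a x' * r x a x'

lemma klDiv_eq_zero_imp {A : Type*} [Fintype A] {p q : A → ℝ}
    (hp : IsPmf p) (hq : IsPmf q) (h : klDiv p q = 0) : p = q := by
  unfold klDiv at h
  split_ifs at h with habs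
  · -- h : ofReal S = 0 ⇒ S ≤ 0
    have hS : ∑ a, p a * Real.log (p a / q a) ≤ 0 := by
      by_contra hpos
      push_neg at hpos
      rw [ENNReal.ofReal_eq_zero] at h
      linarith
    set f : A → ℝ := fun a => p a * Real.log (p a / q a) - (p a - q a) with hf
    have hfnn : ∀ a, 0 ≤ f a := by
      intro a
      rcases eq_or_lt_of_le (hp.1 a) with h0 | hpa
      · simp [hf, ← h0, hq.1 a]
      · have hqa : 0 < q a := lt_of_le_of_ne (hq.1 a) (fun e => by
          have := habs a e.symm; linarith)
        have hlog : Real.log (q a / p a) ≤ q a / p a - 1 :=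
          Real.log_le_sub_one_of_pos (div_pos hqa hpa)
        have : Real.log (p a / q a) = - Real.log (q a / p a) := by
          rw [← Real.log_inv]; congr 1; field_simp
        rw [hf]
        simp only
        rw [this]
        have h2 : p a * (1 - q a / p a) = p a - q a := by field_simp
        nlinarith [mul_le_mul_of_nonneg_left hlog (le_of_lt hpa)]
    have hsumf : ∑ a, f a ≤ 0 := by
      have : ∑ a, f a = (∑ a, p a * Real.log (p a / q a)) - (∑ a, p a - ∑ a, q a) := by
        simp [hf, Finset.sum_sub_distrib]
      rw [this, hp.2, hq.2]; linarith
    have hzero : ∀ a ∈ Finset.univ, f a = 0 := by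
      intro a _
      have hge : (0:ℝ) ≤ ∑ a, f a := Finset.sum_nonneg (fun a _ => hfnn a)
      have hle : ∑ a, f a = 0 := le_antisymm hsumf hge
      exact (Finset.sum_eq_zero_iff_of_nonneg (fun a _ => hfnn a)).mp hle a (Finset.mem_univ a)
    funext a
    have hfa := hzero a (Finset.mem_univ a)
    rcases eq_or_lt_of_le (hp.1 a) with h0 | hpa
    · simp only [hf, ← h0] at hfa
      simp at hfa
      rw [← h0, hfa]
    · have hqa : 0 < q a := lt_of_le_of_ne (hq.1 a) (fun e => by
        have := habs a e.symm; linarith)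
      by_contra hne
      have hne1 : q a / p a ≠ 1 := by
        intro e; apply hne; field_simp at e; linarith
      have hlog : Real.log (q a / p a) < q a / p a - 1 :=
        Real.log_lt_sub_one_of_pos (div_pos hqa hpa) hne1
      have hlog' : Real.log (p a / q a) = - Real.log (q a / p a) := by
        rw [← Real.log_inv]; congr 1; field_simp
      simp only [hf] at hfa
      rw [hlog'] at hfa
      have h2 : p a * (q a / p a - 1) = q a - p a := by field_simp
      nlinarith [mul_lt_mul_of_pos_left hlog hpa]
  · exact absurd h (by simp)

lemma traj_isPmf {S B A : Type*} [Fintype S] [Fintype B] [Fintype A]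
    (μ₀ : S × B → ℝ) (hμ₀ : IsPmf μ₀)
    (T : S × B → A → S × B → ℝ) (hT : ∀ x a, IsPmf (T x a))
    (pol : S × B → A → ℝ) (hpol : ∀ x, IsPmf (pol x)) :
    ∀ t, IsPmf (traj μ₀ T pol t) := by
  intro t
  induction t with
  | zero => exact hμ₀
  | succ t ih =>
    constructor
    · intro x'
      apply Finset.sum_nonneg; intro x _
      apply Finset.sum_nonneg; intro a _
      exact mul_nonneg (mul_nonneg (ih.1 x) ((hpol x).1 a)) ((hT x a).1 x')
    · show ∑ x', ∑ x : S × B, ∑ a : A, traj μ₀ T pol t x * pol x a * T x a x' = 1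
      rw [Finset.sum_comm]
      rw [show ∑ x : S × B, ∑ x' : S × B, ∑ a : A, traj μ₀ T pol t x * pol x a * T x a x'
          = ∑ x : S × B, ∑ a : A, ∑ x' : S × B, traj μ₀ T pol t x * pol x a * T x a x'
          from Finset.sum_congr rfl (fun x _ => Finset.sum_comm)]
      have : ∀ x : S × B, ∑ a : A, ∑ x' : S × B, traj μ₀ T pol t x * pol x a * T x a x'
          = traj μ₀ T pol t x := by
        intro x
        have : ∀ a : A, ∑ x' : S × B, traj μ₀ T pol t x * pol x a * T x a x'
            = traj μ₀ T pol t x * pol x a := by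
          intro a
          rw [← Finset.mul_sum, (hT x a).2, mul_one]
        simp_rw [this]
        rw [← Finset.mul_sum, (hpol x).2, mul_one]
      simp_rw [this]
      exact ih.2

/-- Identifiable policy pairs induce equal trajectory distributions and equal returns:
if `∑_{(s,b)} d^{πφ}(s,b)·KL(πθ(·|s) ‖ πφ(·|b)) = 0`, then `q_{πθ}(t) = q_{πφ}(t)` for all
`t ≥ 0`, and the expected discounted returns coincide for every reward function. -/
theorem identifiable_pair_equal_trajectories_and_returns
    {S B A : Type*} [Fintype S] [Fintype B] [Fintype A]
    [Nonempty S] [Nonempty B] [Nonempty A]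
    (μ₀ : S × B → ℝ) (hμ₀ : IsPmf μ₀)
    (T : S × B → A → S × B → ℝ) (hT : ∀ x a, IsPmf (T x a))
    (γ : ℝ) (hγ0 : 0 < γ) (hγ1 : γ < 1)
    (πθ : S → A → ℝ) (hπθ : ∀ s, IsPmf (πθ s))
    (πφ : B → A → ℝ) (hπφ : ∀ b, IsPmf (πφ b))
    (hid : ∑ x : S × B,
        ENNReal.ofReal (occ γ μ₀ T (beliefPol πφ) x) * klDiv (πθ x.1) (πφ x.2) = 0) :
    (∀ t : ℕ, traj μ₀ T (statePol πθ) t = traj μ₀ T (beliefPol πφ) t) ∧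
    ∀ r : S × B → A → S × B → ℝ,
      ret γ μ₀ T (statePol πθ) r = ret γ μ₀ T (beliefPol πφ) r := by
  have hφpmf : ∀ t, IsPmf (traj μ₀ T (beliefPol πφ) t) :=
    traj_isPmf μ₀ hμ₀ T hT _ (fun x => hπφ x.2)
  -- each summand in hid is zero
  have hterm : ∀ x : S × B,
      ENNReal.ofReal (occ γ μ₀ T (beliefPol πφ) x) * klDiv (πθ x.1) (πφ x.2) = 0 := by
    intro x
    exact (Finset.sum_eq_zero_iff.mp hid) x (Finset.mem_univ x)
  -- key: if traj φ t x > 0 then πθ x.1 = πφ x.2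
  have hkey : ∀ (t : ℕ) (x : S × B), traj μ₀ T (beliefPol πφ) t x ≠ 0 → πθ x.1 = πφ x.2 := by
    intro t x hne
    have htpos : 0 < traj μ₀ T (beliefPol πφ) t x :=
      lt_of_le_of_ne ((hφpmf t).1 x) (Ne.symm hne)
    have hsummable : Summable (fun n : ℕ => γ ^ n * traj μ₀ T (beliefPol πφ) n x) := by
      apply Summable.of_nonneg_of_le
      · intro n; exact mul_nonneg (pow_nonneg hγ0.le n) ((hφpmf n).1 x)
      · intro n
        have h1 : traj μ₀ T (beliefPol πφ) n x ≤ 1 := by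
          have := Finset.single_le_sum (f := traj μ₀ T (beliefPol πφ) n)
            (fun y _ => (hφpmf n).1 y) (Finset.mem_univ x)
          rw [(hφpmf n).2] at this; exact this
        calc γ ^ n * traj μ₀ T (beliefPol πφ) n x ≤ γ ^ n * 1 :=
              mul_le_mul_of_nonneg_left h1 (pow_nonneg hγ0.le n)
          _ = γ ^ n := mul_one _
      · exact summable_geometric_of_lt_one hγ0.le hγ1
    have hocc : 0 < occ γ μ₀ T (beliefPol πφ) x := by
      apply mul_pos (by linarith)
      exact Summable.tsum_pos hsummable
        (fun n => mul_nonneg (pow_nonneg hγ0.le n) ((hφpmf n).1 x)) t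
        (mul_pos (pow_pos hγ0 t) htpos)
    have := hterm x
    rw [mul_eq_zero] at this
    rcases this with h | h
    · rw [ENNReal.ofReal_eq_zero] at h; linarith
    · exact klDiv_eq_zero_imp (hπθ x.1) (hπφ x.2) h
  -- pointwise policy-weighted equality
  have hpw : ∀ (t : ℕ) (x : S × B) (a : A),
      traj μ₀ T (beliefPol πφ) t x * πθ x.1 a = traj μ₀ T (beliefPol πφ) t x * πφ x.2 a := by
    intro t x a
    by_cases h : traj μ₀ T (beliefPol πφ) t x = 0
    · rw [h]; ring
    · rw [hkey t x h]
  have htraj : ∀ t : ℕ, traj μ₀ T (statePol πθ) t = traj μ₀ T (beliefPol πφ) t := by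
    intro t
    induction t with
    | zero => rfl
    | succ t ih =>
      funext x'
      show ∑ x : S × B, ∑ a : A, traj μ₀ T (statePol πθ) t x * statePol πθ x a * T x a x'
         = ∑ x : S × B, ∑ a : A, traj μ₀ T (beliefPol πφ) t x * beliefPol πφ x a * T x a x'
      rw [ih]
      apply Finset.sum_congr rfl; intro x _
      apply Finset.sum_congr rfl; intro a _
      exact congrArg (fun y => y * T x a x') (hpw t x a)
  refine ⟨htraj, fun r => ?_⟩
  unfold ret
  apply tsum_congr; intro t
  congr 1
  rw [htraj t]
  apply Finset.sum_congr rfl; intro x _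
  apply Finset.sum_congr rfl; intro a _
  apply Finset.sum_congr rfl; intro x' _
  exact congrArg (fun y => y * T x a x' * r x a x') (hpw t x a)
end
end

section
/- Lemma 2 (Convergence of the iterative AIL procedure): fix a belief-conditional policy π̂ and let (κ_k)_{k≥0} be any sequence of belief-conditional policies such that for every k ≥ 0, κ_{k+1}(·|b) = π̂(·|b) for every b ∈ B with d^{κ_k}(b) > 0. Then for every k ≥ 0 one has q_{κ_k}(t) = q_{π̂}(t) for all 0 ≤ t ≤ k, and consequently |d^{κ_k}(s,b) − d^{π̂}(s,b)| ≤ γ^{k+1} for every (s,b) ∈ S × B, so the occupancies of the iterates converge to d^{π̂} at rate O(γ^k). -/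
open scoped BigOperators Classical

noncomputable section

section Aux

variable {S B A : Type*} [Fintype S] [Fintype B] [Fintype A]
variable (μ₀ : S × B → ℝ) (T : S × B → A → S × B → ℝ) (pol : S × B → A → ℝ)

lemma traj_nonneg (hμ : ∀ x, 0 ≤ μ₀ x) (hT : ∀ x a, IsPmf (T x a))
    (hpol : ∀ x a, 0 ≤ pol x a) : ∀ t x, 0 ≤ traj μ₀ T pol t x := by
  intro t
  induction t with
  | zero => exact hμ
  | succ t ih =>
    intro x'
    refine Finset.sum_nonneg fun x _ => Finset.sum_nonneg fun a _ => ?_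
    exact mul_nonneg (mul_nonneg (ih x) (hpol x a)) ((hT x a).1 x')

lemma traj_sum_one (hμ : IsPmf μ₀) (hT : ∀ x a, IsPmf (T x a))
    (hpol : ∀ x, ∑ a, pol x a = 1) :
    ∀ t, ∑ x, traj μ₀ T pol t x = 1 := by
  intro t
  induction t with
  | zero => exact hμ.2
  | succ t ih =>
    have key : ∀ x : S × B, ∑ x' : S × B, ∑ a, traj μ₀ T pol t x * pol x a * T x a x'
        = traj μ₀ T pol t x := by
      intro x
      rw [Finset.sum_comm]
      calc ∑ a, ∑ x' : S × B, traj μ₀ T pol t x * pol x a * T x a x'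
          = ∑ a, traj μ₀ T pol t x * pol x a := by
            refine Finset.sum_congr rfl fun a _ => ?_
            rw [← Finset.mul_sum, (hT x a).2, mul_one]
        _ = traj μ₀ T pol t x := by rw [← Finset.mul_sum, hpol x, mul_one]
    show ∑ x' : S × B, ∑ x : S × B, ∑ a : A, traj μ₀ T pol t x * pol x a * T x a x' = 1
    rw [Finset.sum_comm]
    rw [Finset.sum_congr rfl fun x _ => key x, ih]

lemma traj_le_one (hμ : IsPmf μ₀) (hT : ∀ x a, IsPmf (T x a))
    (hpol0 : ∀ x a, 0 ≤ pol x a) (hpol : ∀ x, ∑ a, pol x a = 1) :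
    ∀ t x, traj μ₀ T pol t x ≤ 1 := by
  intro t x
  have h1 := traj_sum_one μ₀ T pol hμ hT hpol t
  have := Finset.single_le_sum (f := fun y => traj μ₀ T pol t y)
    (fun y _ => traj_nonneg μ₀ T pol hμ.1 hT hpol0 t y) (Finset.mem_univ x)
  linarith

lemma traj_step_congr (pol' : S × B → A → ℝ)
    (hnn : ∀ t x, 0 ≤ traj μ₀ T pol' t x)
    (t : ℕ) (heq : traj μ₀ T pol t = traj μ₀ T pol' t)
    (hpol : ∀ x : S × B, 0 < traj μ₀ T pol' t x → pol x = pol' x) :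
    traj μ₀ T pol (t + 1) = traj μ₀ T pol' (t + 1) := by
  funext x'
  show (∑ x : S × B, ∑ a : A, traj μ₀ T pol t x * pol x a * T x a x')
      = ∑ x : S × B, ∑ a : A, traj μ₀ T pol' t x * pol' x a * T x a x'
  refine Finset.sum_congr rfl fun x _ => Finset.sum_congr rfl fun a _ => ?_
  rw [heq]
  rcases lt_or_eq_of_le (hnn t x) with h | h
  · rw [hpol x h]
  · rw [← h, zero_mul, zero_mul, zero_mul, zero_mul]

lemma traj_summable {γ : ℝ} (hγ0 : 0 < γ) (hγ1 : γ < 1)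
    (hμ : IsPmf μ₀) (hT : ∀ x a, IsPmf (T x a))
    (hpol0 : ∀ x a, 0 ≤ pol x a) (hpol : ∀ x, ∑ a, pol x a = 1) (x : S × B) :
    Summable (fun t : ℕ => γ ^ t * traj μ₀ T pol t x) := by
  refine Summable.of_nonneg_of_le
    (fun t => mul_nonneg (pow_nonneg hγ0.le t)
      (traj_nonneg μ₀ T pol hμ.1 hT hpol0 t x))
    (fun t => ?_) (summable_geometric_of_lt_one hγ0.le hγ1)
  calc γ ^ t * traj μ₀ T pol t x ≤ γ ^ t * 1 := by
        exact mul_le_mul_of_nonneg_left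
          (traj_le_one μ₀ T pol hμ hT hpol0 hpol t x) (pow_nonneg hγ0.le t)
    _ = γ ^ t := mul_one _

lemma occ_pos_of_traj_pos {γ : ℝ} (hγ0 : 0 < γ) (hγ1 : γ < 1)
    (hμ : IsPmf μ₀) (hT : ∀ x a, IsPmf (T x a))
    (hpol0 : ∀ x a, 0 ≤ pol x a) (hpol : ∀ x, ∑ a, pol x a = 1)
    {t : ℕ} {x : S × B} (h : 0 < traj μ₀ T pol t x) :
    0 < occ γ μ₀ T pol x := by
  have hsum := traj_summable μ₀ T pol hγ0 hγ1 hμ hT hpol0 hpol x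
  have hterm : (0:ℝ) < γ ^ t * traj μ₀ T pol t x := mul_pos (pow_pos hγ0 t) h
  have hle : γ ^ t * traj μ₀ T pol t x ≤ ∑' u : ℕ, γ ^ u * traj μ₀ T pol u x :=
    Summable.le_tsum hsum t fun u _ => mul_nonneg (pow_nonneg hγ0.le u)
      (traj_nonneg μ₀ T pol hμ.1 hT hpol0 u x)
  exact mul_pos (by linarith) (lt_of_lt_of_le hterm hle)

lemma occ_nonneg {γ : ℝ} (hγ0 : 0 < γ) (hγ1 : γ < 1)
    (hμ : ∀ x, 0 ≤ μ₀ x) (hT : ∀ x a, IsPmf (T x a))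
    (hpol0 : ∀ x a, 0 ≤ pol x a) (x : S × B) :
    0 ≤ occ γ μ₀ T pol x :=
  mul_nonneg (by linarith) (tsum_nonneg fun t =>
    mul_nonneg (pow_nonneg hγ0.le t) (traj_nonneg μ₀ T pol hμ hT hpol0 t x))

end Aux

/-- Lemma 2 (Convergence of the iterative AIL procedure): if each iterate `κ (k+1)`
agrees with `π̂` at every belief state in the support of `d^{κ k}`, then the time-`t`
marginals of `κ k` and `π̂` agree for all `t ≤ k`, and the occupancy of `κ k` is within
`γ^(k+1)` of the occupancy of `π̂` everywhere. -/
theorem iterative_ail_occupancy_convergence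
    {S B A : Type*} [Fintype S] [Fintype B] [Fintype A]
    [Nonempty S] [Nonempty B] [Nonempty A]
    (μ₀ : S × B → ℝ) (hμ₀ : IsPmf μ₀)
    (T : S × B → A → S × B → ℝ) (hT : ∀ x a, IsPmf (T x a))
    (γ : ℝ) (hγ0 : 0 < γ) (hγ1 : γ < 1)
    (πhat : B → A → ℝ) (hπhat : ∀ b, IsPmf (πhat b))
    (κ : ℕ → B → A → ℝ) (hκ : ∀ k b, IsPmf (κ k b))
    (hiter : ∀ k : ℕ, ∀ b : B,
      0 < ∑ s : S, occ γ μ₀ T (beliefPol (κ k)) (s, b) → κ (k + 1) b = πhat b) :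
    (∀ k : ℕ, ∀ t ≤ k,
        traj μ₀ T (beliefPol (κ k)) t = traj μ₀ T (beliefPol πhat) t) ∧
    ∀ k : ℕ, ∀ x : S × B,
      |occ γ μ₀ T (beliefPol (κ k)) x - occ γ μ₀ T (beliefPol πhat) x| ≤ γ ^ (k + 1) := by
  -- basic pmf facts about the pair policies
  have hπ0 : ∀ x : S × B, ∀ a, 0 ≤ beliefPol πhat x a := fun x a => (hπhat x.2).1 a
  have hπ1 : ∀ x : S × B, ∑ a, beliefPol πhat x a = 1 := fun x => (hπhat x.2).2
  have hκ0 : ∀ k, ∀ x : S × B, ∀ a, 0 ≤ beliefPol (κ k) x a := fun k x a => (hκ k x.2).1 a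
  have hκ1 : ∀ k, ∀ x : S × B, ∑ a, beliefPol (κ k) x a = 1 := fun k x => (hκ k x.2).2
  have hπnn := traj_nonneg μ₀ T (beliefPol πhat) hμ₀.1 hT hπ0
  have hπle := traj_le_one μ₀ T (beliefPol πhat) hμ₀ hT hπ0 hπ1
  have hκnn := fun k => traj_nonneg μ₀ T (beliefPol (κ k)) hμ₀.1 hT (hκ0 k)
  have hκle := fun k => traj_le_one μ₀ T (beliefPol (κ k)) hμ₀ hT (hκ0 k) (hκ1 k)
  -- Part 1
  have part1 : ∀ k : ℕ, ∀ t ≤ k,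
      traj μ₀ T (beliefPol (κ k)) t = traj μ₀ T (beliefPol πhat) t := by
    intro k
    induction k with
    | zero =>
      intro t ht
      interval_cases t
      rfl
    | succ k ih =>
      -- agreement of κ (k+1) with πhat on supports of traj πhat t, t ≤ k
      have hagree : ∀ t ≤ k, ∀ x : S × B,
          0 < traj μ₀ T (beliefPol πhat) t x →
          beliefPol (κ (k + 1)) x = beliefPol πhat x := by
        intro t ht x hx
        have hx' : 0 < traj μ₀ T (beliefPol (κ k)) t x := by
          rw [ih t ht]; exact hx
        have hoccpos : 0 < occ γ μ₀ T (beliefPol (κ k)) x :=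
          occ_pos_of_traj_pos μ₀ T (beliefPol (κ k)) hγ0 hγ1 hμ₀ hT (hκ0 k) (hκ1 k) hx'
        have hsumpos : 0 < ∑ s : S, occ γ μ₀ T (beliefPol (κ k)) (s, x.2) := by
          have hle : occ γ μ₀ T (beliefPol (κ k)) (x.1, x.2) ≤
              ∑ s : S, occ γ μ₀ T (beliefPol (κ k)) (s, x.2) :=
            Finset.single_le_sum (f := fun s => occ γ μ₀ T (beliefPol (κ k)) (s, x.2))
              (fun s _ => occ_nonneg μ₀ T (beliefPol (κ k)) hγ0 hγ1 hμ₀.1 hT (hκ0 k) _)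
              (Finset.mem_univ x.1)
          calc (0:ℝ) < occ γ μ₀ T (beliefPol (κ k)) (x.1, x.2) := by
                simpa using hoccpos
            _ ≤ _ := hle
        have := hiter k x.2 hsumpos
        funext a
        simp [beliefPol, this]
      -- now induct on t ≤ k+1
      intro t ht
      induction t with
      | zero => rfl
      | succ t iht =>
        have ht' : t ≤ k := Nat.lt_succ_iff.mp ht
        exact traj_step_congr μ₀ T (beliefPol (κ (k + 1))) (beliefPol πhat) hπnn t
          (iht (le_trans ht' (Nat.le_succ k))) (hagree t ht')
  refine ⟨part1, ?_⟩
  -- Part 2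
  intro k x
  set f : ℕ → ℝ := fun t => γ ^ t *
    (traj μ₀ T (beliefPol (κ k)) t x - traj μ₀ T (beliefPol πhat) t x) with hf
  have hsκ := traj_summable μ₀ T (beliefPol (κ k)) hγ0 hγ1 hμ₀ hT (hκ0 k) (hκ1 k) x
  have hsπ := traj_summable μ₀ T (beliefPol πhat) hγ0 hγ1 hμ₀ hT hπ0 hπ1 x
  have hfs : Summable f := by
    have : f = (fun t => γ ^ t * traj μ₀ T (beliefPol (κ k)) t x)
        - (fun t => γ ^ t * traj μ₀ T (beliefPol πhat) t x) := by
      funext t; simp [hf, mul_sub]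
    rw [this]
    exact hsκ.sub hsπ
  have hdiff : occ γ μ₀ T (beliefPol (κ k)) x - occ γ μ₀ T (beliefPol πhat) x
      = (1 - γ) * ∑' t, f t := by
    simp only [occ, hf]
    rw [← mul_sub, ← Summable.tsum_sub hsκ hsπ]
    congr 1
    exact tsum_congr fun t => (mul_sub _ _ _).symm
  -- first k+1 terms of f vanish
  have hzero : ∀ t < k + 1, f t = 0 := by
    intro t ht
    have := part1 k t (Nat.lt_succ_iff.mp ht)
    simp [hf, this]
  have htail : ∑' t, f t = ∑' t, f (t + (k + 1)) := by
    rw [← Summable.sum_add_tsum_nat_add (k + 1) hfs]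
    rw [Finset.sum_eq_zero fun t htm => hzero t (Finset.mem_range.mp htm), zero_add]
  -- bound |f t| ≤ γ ^ t
  have hbound : ∀ t, |f t| ≤ γ ^ t := by
    intro t
    have h1 : |traj μ₀ T (beliefPol (κ k)) t x - traj μ₀ T (beliefPol πhat) t x| ≤ 1 := by
      rw [abs_le]
      constructor
      · have := hκnn k t x; have := hπle t x; linarith
      · have := hκle k t x; have := hπnn t x; linarith
    calc |f t| = γ ^ t * |traj μ₀ T (beliefPol (κ k)) t x - traj μ₀ T (beliefPol πhat) t x| := by
          rw [hf, abs_mul, abs_of_nonneg (pow_nonneg hγ0.le t)]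
      _ ≤ γ ^ t * 1 := mul_le_mul_of_nonneg_left h1 (pow_nonneg hγ0.le t)
      _ = γ ^ t := mul_one _
  have hgs : Summable (fun t : ℕ => γ ^ (t + (k + 1))) := by
    refine ((summable_geometric_of_lt_one hγ0.le hγ1).mul_right (γ ^ (k + 1))).congr fun t => ?_
    ring
  have habs : |∑' t, f (t + (k + 1))| ≤ ∑' t : ℕ, γ ^ (t + (k + 1)) := by
    have hfsa : Summable fun t => |f (t + (k + 1))| :=
      hgs.of_nonneg_of_le (fun t => abs_nonneg _) (fun t => hbound _)
    calc |∑' t, f (t + (k + 1))| ≤ ∑' t, |f (t + (k + 1))| := by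
          simpa using norm_tsum_le_tsum_norm (f := fun t => f (t + (k + 1))) (by simpa using hfsa)
      _ ≤ ∑' t : ℕ, γ ^ (t + (k + 1)) :=
          Summable.tsum_le_tsum (fun t => hbound _) hfsa hgs
  have hgeom : ∑' t : ℕ, γ ^ (t + (k + 1)) = γ ^ (k + 1) / (1 - γ) := by
    have : (fun t : ℕ => γ ^ (t + (k + 1))) = fun t : ℕ => γ ^ t * γ ^ (k + 1) := by
      funext t; rw [pow_add]
    rw [this, tsum_mul_right, tsum_geometric_of_lt_one hγ0.le hγ1]
    field_simp
  rw [hdiff, htail, abs_mul, abs_of_nonneg (by linarith : (0:ℝ) ≤ 1 - γ)]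
  calc (1 - γ) * |∑' t, f (t + (k + 1))| ≤ (1 - γ) * (γ ^ (k + 1) / (1 - γ)) := by
        apply mul_le_mul_of_nonneg_left _ (by linarith)
        rw [← hgeom]; exact habs
    _ = γ ^ (k + 1) := by
        rw [mul_comm, div_mul_cancel₀ _ (by linarith : (1:ℝ) - γ ≠ 0)]
end
end

section
/- A2D Q-based gradient estimator (supplementary lemma, Eq. (19)): let I ⊆ ℝ be open, θ₀ ∈ I, and for each (a,s) ∈ A × S let θ ↦ π_θ(a|s) be a function on I such that π_θ(·|s) is a pmf on A for every θ ∈ I, π_{θ₀}(a|s) > 0, and θ ↦ π_θ(a|s) is differentiable at θ₀ with derivative π'(a|s). Fix Q : A × B → ℝ and define π̂_θ(a|b) = ∑_s d(s|b)·π_θ(a|s) for b with d(b) > 0, and J(θ) = ∑_{b : d(b)>0} d(b)·∑_a π̂_θ(a|b)·Q(a,b). Then J is differentiable at θ₀ with J′(θ₀) = ∑_{(s,b)∈S×B} d(s,b)·∑_a π_{θ₀}(a|s)·Q(a,b)·π'(a|s)/π_{θ₀}(a|s), i.e. the gradient of the implicit-policy objective equals the expectation under d(s,b) and π_{θ₀}(a|s)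 of Q(a,b) times the score (d/dθ) log π_θ(a|s) at θ₀. -/
open scoped BigOperators Classical

noncomputable section

/-!
Averaging `π_θ(a|s)` against `d(s|b)` and then against `d(b)` just averages against the joint
`d(s,b)`: the beliefs with `d(b) = 0` carry no mass. So `J(θ) = ∑_{s,b} d(s,b) ∑_a π_θ(a|s) Q(a,b)`
for every `θ`, which is differentiated term by term; the score form of the derivative is the
likelihood-ratio identity `π' = π · (π' / π)`, valid because `π_{θ₀} > 0`.
-/

section ImplicitPolicy

variable {S B A : Type*} [Fintype S] [Fintype A]

theorem marginal_mul_sum_mixture {d : S × B → ℝ} {dB : B → ℝ} {b : B} (hb : dB b ≠ 0)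
    (g : S → A → ℝ) (Q : A → B → ℝ) :
    dB b * ∑ a, (∑ s, d (s, b) / dB b * g s a) * Q a b = ∑ s, d (s, b) * ∑ a, g s a * Q a b := by
  simp only [Finset.mul_sum, Finset.sum_mul]
  rw [Finset.sum_comm]
  refine Finset.sum_congr rfl fun s _ => Finset.sum_congr rfl fun a _ => ?_
  field_simp

theorem eq_zero_of_marginal_nonpos {d : S × B → ℝ} (hd : ∀ x, 0 ≤ d x) {b : B}
    (hb : ¬ 0 < ∑ s, d (s, b)) (s : S) : d (s, b) = 0 :=
  (Finset.sum_eq_zero_iff_of_nonneg fun s _ => hd (s, b)).mp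
    (le_antisymm (not_lt.mp hb) (Finset.sum_nonneg fun s _ => hd (s, b))) s (Finset.mem_univ s)

theorem belief_objective_eq_state_objective [Fintype B] {d : S × B → ℝ} (hd : ∀ x, 0 ≤ d x) {dB : B → ℝ}
    (hdB : ∀ b, dB b = ∑ s, d (s, b)) (g : S → A → ℝ) (Q : A → B → ℝ) :
    (∑ b : B, if 0 < dB b then dB b * ∑ a, (∑ s, d (s, b) / dB b * g s a) * Q a b else 0) =
      ∑ x : S × B, d x * ∑ a, g x.1 a * Q a x.2 := by
  rw [Fintype.sum_prod_type_right]
  refine Finset.sum_congr rfl fun b _ => ?_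
  split_ifs with hb
  · exact marginal_mul_sum_mixture hb.ne' g Q
  · rw [hdB] at hb
    simp [eq_zero_of_marginal_nonpos hd hb]

theorem hasDerivAt_state_objective [Fintype B] (d : S × B → ℝ) {π : ℝ → S → A → ℝ} {π' : S → A → ℝ}
    {θ₀ : ℝ} (hderiv : ∀ s a, HasDerivAt (fun θ => π θ s a) (π' s a) θ₀) (Q : A → B → ℝ) :
    HasDerivAt (fun θ => ∑ x : S × B, d x * ∑ a, π θ x.1 a * Q a x.2)
      (∑ x : S × B, d x * ∑ a, π' x.1 a * Q a x.2) θ₀ :=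
  HasDerivAt.fun_sum fun x _ =>
    (HasDerivAt.fun_sum fun a _ => (hderiv x.1 a).mul_const (Q a x.2)).const_mul (d x)

end ImplicitPolicy

theorem a2d_q_based_gradient_estimator_general
    {S B A : Type*} [Fintype S] [Fintype B] [Fintype A]
    (d : S × B → ℝ) (hd : IsPmf d)
    (dB : B → ℝ) (hdB : ∀ b, dB b = ∑ s, d (s, b))
    (θ₀ : ℝ)
    (π : ℝ → S → A → ℝ) (π' : S → A → ℝ)
    (hpos : ∀ s a, 0 < π θ₀ s a)
    (hderiv : ∀ s a, HasDerivAt (fun θ => π θ s a) (π' s a) θ₀)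
    (Q : A → B → ℝ)
    (J : ℝ → ℝ)
    (hJ : ∀ θ, J θ = ∑ b : B, if 0 < dB b then
        dB b * ∑ a : A, (∑ s : S, d (s, b) / dB b * π θ s a) * Q a b else 0) :
    HasDerivAt J
      (∑ x : S × B, d x * ∑ a : A,
        π θ₀ x.1 a * Q a x.2 * (π' x.1 a / π θ₀ x.1 a)) θ₀ := by
  have hJ_state : J = fun θ => ∑ x : S × B, d x * ∑ a, π θ x.1 a * Q a x.2 :=
    funext fun θ => (hJ θ).trans (belief_objective_eq_state_objective hd.1 hdB (π θ) Q)
  have hscore : ∀ s a b, π θ₀ s a * Q a b * (π' s a / π θ₀ s a) = π' s a * Q a b := by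
    intro s a b
    field_simp [(hpos s a).ne']
  simp only [hscore]
  exact hJ_state ▸ hasDerivAt_state_objective d hderiv Q

/-- A2D Q-based gradient estimator: the gradient of the implicit-policy objective
`J(θ) = ∑_{b : d(b)>0} d(b)·∑_a π̂_θ(a|b)·Q(a,b)` equals the expectation under `d(s,b)`
and `π_{θ₀}(a|s)` of `Q(a,b)` times the score `(d/dθ) log π_θ(a|s)` at `θ₀`. -/
theorem a2d_q_based_gradient_estimator
    {S B A : Type*} [Fintype S] [Fintype B] [Fintype A]
    [Nonempty S] [Nonempty B] [Nonempty A]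
    (d : S × B → ℝ) (hd : IsPmf d)
    (dB : B → ℝ) (hdB : ∀ b, dB b = ∑ s, d (s, b))
    (I : Set ℝ) (hI : IsOpen I) (θ₀ : ℝ) (hθ₀ : θ₀ ∈ I)
    (π : ℝ → S → A → ℝ) (π' : S → A → ℝ)
    (hpmf : ∀ θ ∈ I, ∀ s, IsPmf (π θ s))
    (hpos : ∀ s a, 0 < π θ₀ s a)
    (hderiv : ∀ s a, HasDerivAt (fun θ => π θ s a) (π' s a) θ₀)
    (Q : A → B → ℝ)
    (J : ℝ → ℝ)
    (hJ : ∀ θ, J θ = ∑ b : B, if 0 < dB b then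
        dB b * ∑ a : A, (∑ s : S, d (s, b) / dB b * π θ s a) * Q a b else 0) :
    HasDerivAt J
      (∑ x : S × B, d x * ∑ a : A,
        π θ₀ x.1 a * Q a x.2 * (π' x.1 a / π θ₀ x.1 a)) θ₀ :=
  a2d_q_based_gradient_estimator_general d hd dB hdB θ₀ π π' hpos hderiv Q J hJ
end
end
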